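/- arXiv:2311.07565 — 6 statements merged into one kernel-verified Lean document; each statement's English description precedes it below -/
import Mathlib

section
/- Let μ: ℝ → ℝ be continuously differentiable with μ' ≥ 0 and satisfying μ'(u) ≤ μ'(u')·e^{M|u−u'|} for all u, u'. Define the secant slope α(u,u') = (μ(u) − μ(u'))/(u − u') for u ≠ u' and α(u,u) = μ'(u). Then for all u, u': μ'(u)·h(−M|u−u'|) ≤ α(u,u') ≤ μ'(u)·h(M|u−u'|), where h(x) = (e^x − 1)/x for x ≠ 0 and h(0) = 1. -/
/-!
Write the secant slope as the average `∫₀¹ μ'(u + s (u' - u)) ds` of the derivative along the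
segment from `u` to `u'`. The point `u + s (u' - u)` lies at distance `s |u - u'|` from `u`, so the
growth bound, applied in both directions, squeezes the integrand between `μ'(u) e^{∓M|u-u'| s}`;
and `∫₀¹ e^{c s} ds = h(c)`.
-/

open Real MeasureTheory intervalIntegral

theorem integral_exp_mul_zero_one (c : ℝ) :
    ∫ s in (0 : ℝ)..1, exp (c * s) = if c = 0 then 1 else (exp c - 1) / c := by
  split_ifs with hc
  · simp [hc]
  · rw [integral_comp_mul_left (fun x => exp x) hc, integral_exp, mul_zero, mul_one, exp_zero,
      smul_eq_mul, inv_mul_eq_div]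

theorem integral_deriv_comp_lineMap_zero_one {f f' : ℝ → ℝ} {a b : ℝ} (hab : a ≠ b)
    (hf : ∀ x ∈ Set.uIcc a b, HasDerivAt f (f' x) x) (hf' : IntervalIntegrable f' volume a b) :
    ∫ s in (0 : ℝ)..1, f' (a + s * (b - a)) = (f a - f b) / (a - b) := by
  have hba : b - a ≠ 0 := sub_ne_zero.mpr hab.symm
  simp_rw [add_comm a, mul_comm _ (b - a)]
  rw [integral_comp_mul_add (fun x => f' x) hba, mul_zero, zero_add, mul_one, sub_add_cancel,
    integral_eq_sub_of_hasDerivAt hf hf', smul_eq_mul, inv_mul_eq_div, ← neg_sub a b,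
    ← neg_sub (f a) (f b), neg_div_neg_eq]

theorem mul_exp_neg_le_of_growth {g : ℝ → ℝ} {M : ℝ}
    (hgrow : ∀ x y : ℝ, g x ≤ g y * exp (M * |x - y|)) (x y : ℝ) :
    g x * exp (-(M * |x - y|)) ≤ g y := by
  rw [exp_neg, mul_inv_le_iff₀ (exp_pos _)]
  exact hgrow x y

theorem stmt_2_general (μ μ' : ℝ → ℝ) (M : ℝ)
    (hd : ∀ u, HasDerivAt μ (μ' u) u)
    (hcont : Continuous μ')
    (hgrow : ∀ u u' : ℝ, μ' u ≤ μ' u' * Real.exp (M * |u - u'|))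
    (α : ℝ → ℝ → ℝ)
    (hα : ∀ u u' : ℝ, α u u' = if u = u' then μ' u else (μ u - μ u') / (u - u'))
    (h : ℝ → ℝ)
    (hh : ∀ x : ℝ, h x = if x = 0 then 1 else (Real.exp x - 1) / x) :
    ∀ u u' : ℝ,
      μ' u * h (-(M * |u - u'|)) ≤ α u u' ∧ α u u' ≤ μ' u * h (M * |u - u'|) := by
  intro u u'
  have hα_avg : α u u' = ∫ s in (0 : ℝ)..1, μ' (u + s * (u' - u)) := by
    rw [hα]
    split_ifs with huu'
    · simp [huu']
    · exact (integral_deriv_comp_lineMap_zero_one huu' (fun x _ => hd x)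
        (hcont.intervalIntegrable u u')).symm
  have hdist : ∀ s ∈ Set.Icc (0 : ℝ) 1, |u - (u + s * (u' - u))| = |u - u'| * s := by
    intro s hs
    rw [sub_add_cancel_left, abs_neg, abs_mul, abs_of_nonneg hs.1, abs_sub_comm, mul_comm]
  have hint_μ' : IntervalIntegrable (fun s => μ' (u + s * (u' - u))) volume 0 1 :=
    (hcont.comp (by fun_prop)).intervalIntegrable 0 1
  have hint_exp : ∀ c, IntervalIntegrable (fun s => μ' u * exp (c * s)) volume 0 1 :=
    fun c => (by fun_prop : Continuous _).intervalIntegrable 0 1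
  rw [hα_avg, hh, hh, ← integral_exp_mul_zero_one, ← integral_exp_mul_zero_one,
    ← intervalIntegral.integral_const_mul, ← intervalIntegral.integral_const_mul]
  constructor
  · refine integral_mono_on zero_le_one (hint_exp _) hint_μ' fun s hs => ?_
    have := mul_exp_neg_le_of_growth hgrow u (u + s * (u' - u))
    rwa [hdist s hs, ← mul_assoc, ← neg_mul] at this
  · refine integral_mono_on zero_le_one hint_μ' (hint_exp _) fun s hs => ?_
    have := hgrow (u + s * (u' - u)) u
    rwa [abs_sub_comm, hdist s hs, ← mul_assoc] at this

theorem stmt_2 (μ μ' : ℝ → ℝ) (M : ℝ) (hM : 0 < M)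
    (hd : ∀ u, HasDerivAt μ (μ' u) u)
    (hcont : Continuous μ')
    (hpos : ∀ u, 0 ≤ μ' u)
    (hgrow : ∀ u u' : ℝ, μ' u ≤ μ' u' * Real.exp (M * |u - u'|))
    (α : ℝ → ℝ → ℝ)
    (hα : ∀ u u' : ℝ, α u u' = if u = u' then μ' u else (μ u - μ u') / (u - u'))
    (h : ℝ → ℝ)
    (hh : ∀ x : ℝ, h x = if x = 0 then 1 else (Real.exp x - 1) / x) :
    ∀ u u' : ℝ,
      μ' u * h (-(M * |u - u'|)) ≤ α u u' ∧ α u u' ≤ μ' u * h (M * |u - u'|) :=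
  stmt_2_general μ μ' M hd hcont hgrow α hα h hh
end

section
/- Let Q be a probability measure on ℝ with cumulant generating function ψ(u) = log ∫ e^{uy} Q(dy) finite on an open interval containing u. Let μ = ψ' and suppose the family is M-self-concordant, i.e., μ'(v) ≤ μ'(w)·e^{M|v−w|} for all v, w in the domain interior. Then for the tilted measure Q_u (with density e^{yu − ψ(u)} w.r.t. Q), its cumulant generating function satisfies ψ_{Q_u}(s) ≤ s·μ(u) + s²·μ'(u) for all |s| ≤ log(2)/M (assuming u + s is in the domain interior). -/
/-!
Tilting by `e^{yu - ψ(u)}` shifts the cumulant generating function, so the left-hand side is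
`ψ(u + s) - ψ(u)`. On the segment between `u` and `u + s`, self-concordance and `M |s| ≤ log 2` give
`ψ'' = μ' ≤ 2 μ'(u)`, and the second-order Taylor bound turns this into
`ψ(u + s) ≤ ψ(u) + s μ(u) + s² μ'(u)`.
-/

open MeasureTheory Real Set

lemma ConcaveOn.le_add_mul_sub_of_hasDerivAt {S : Set ℝ} {f : ℝ → ℝ} {f' x y : ℝ}
    (hfc : ConcaveOn ℝ S f) (hx : x ∈ S) (hy : y ∈ S) (hf : HasDerivAt f f' x) :
    f y ≤ f x + f' * (y - x) := by
  rcases lt_trichotomy x y with hxy | rfl | hyx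
  · have h := hfc.slope_le_of_hasDerivAt hx hy hxy hf
    rw [slope_def_field, div_le_iff₀ (sub_pos.2 hxy)] at h
    linarith
  · simp
  · have h := hfc.le_slope_of_hasDerivAt hy hx hyx hf
    rw [slope_def_field, le_div_iff₀ (sub_pos.2 hyx)] at h
    linarith

lemma le_add_mul_add_sq_of_deriv2_le {f f' f'' : ℝ → ℝ} {a b B : ℝ}
    (hf : ∀ x ∈ uIcc a b, HasDerivAt f (f' x) x)
    (hf' : ∀ x ∈ uIcc a b, HasDerivAt f' (f'' x) x)
    (hB : ∀ x ∈ uIcc a b, f'' x ≤ B) :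
    f b ≤ f a + f' a * (b - a) + B / 2 * (b - a) ^ 2 := by
  set g : ℝ → ℝ := fun x => f x - B / 2 * (x - a) ^ 2
  have hg : ∀ x ∈ uIcc a b, HasDerivAt g (f' x - B * (x - a)) x := fun x hx =>
    ((hf x hx).sub ((((hasDerivAt_id' x).sub_const a).pow 2).const_mul (B / 2))).congr_deriv
      (by push_cast; ring)
  have hg' : ∀ x ∈ uIcc a b, HasDerivAt (fun x => f' x - B * (x - a)) (f'' x - B) x :=
    fun x hx => ((hf' x hx).sub (((hasDerivAt_id' x).sub_const a).const_mul B)).congr_deriv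
      (by ring)
  have hconc : ConcaveOn ℝ (uIcc a b) g :=
    concaveOn_of_hasDerivWithinAt2_nonpos (convex_uIcc a b)
      (fun x hx => (hg x hx).continuousAt.continuousWithinAt)
      (fun x hx => (hg x (interior_subset hx)).hasDerivWithinAt)
      (fun x hx => (hg' x (interior_subset hx)).hasDerivWithinAt)
      (fun x hx => sub_nonpos.2 (hB x (interior_subset hx)))
  have := hconc.le_add_mul_sub_of_hasDerivAt left_mem_uIcc right_mem_uIcc
    (hg a left_mem_uIcc)
  simp only [g, sub_self] at this
  linarith

lemma integral_exp_mul_withDensity_exp (Q : Measure ℝ) (u c s : ℝ) :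
    ∫ y, exp (s * y) ∂(Q.withDensity fun y => ENNReal.ofReal (exp (y * u - c)))
      = exp (-c) * ∫ y, exp ((u + s) * y) ∂Q := by
  rw [integral_withDensity_eq_integral_toReal_smul (by fun_prop)
      (ae_of_all _ fun _ => ENNReal.ofReal_lt_top), ← integral_const_mul]
  congr 1 with y
  rw [ENNReal.toReal_ofReal (exp_nonneg _), smul_eq_mul, ← exp_add, ← exp_add]
  ring_nf

lemma log_integral_exp_mul_withDensity_exp {Q : Measure ℝ} [NeZero Q] {u c s : ℝ}
    (hint : Integrable (fun y => exp ((u + s) * y)) Q) :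
    log (∫ y, exp (s * y) ∂(Q.withDensity fun y => ENNReal.ofReal (exp (y * u - c))))
      = log (∫ y, exp ((u + s) * y) ∂Q) - c := by
  rw [integral_exp_mul_withDensity_exp, log_mul (exp_ne_zero _) (integral_exp_pos hint).ne',
    log_exp]
  ring

theorem stmt_4_general (Q : Measure ℝ) [IsProbabilityMeasure Q]
    (U : Set ℝ) (hconv : Convex ℝ U)
    (ψ μ μ' : ℝ → ℝ) (M : ℝ) (hM : 0 < M)
    (hψ : ∀ u ∈ U, ψ u = Real.log (∫ y, Real.exp (u * y) ∂Q))
    (hint : ∀ u ∈ U, Integrable (fun y => Real.exp (u * y)) Q)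
    (hd1 : ∀ u ∈ U, HasDerivAt ψ (μ u) u)
    (hd2 : ∀ u ∈ U, HasDerivAt μ (μ' u) u)
    (hpos : ∀ u ∈ U, 0 ≤ μ' u)
    (hsc : ∀ v ∈ U, ∀ w ∈ U, μ' v ≤ μ' w * Real.exp (M * |v - w|))
    (u s : ℝ) (hu : u ∈ U) (hus : u + s ∈ U)
    (hs : |s| ≤ Real.log 2 / M) :
    Real.log (∫ y, Real.exp (s * y)
        ∂(Q.withDensity fun y => ENNReal.ofReal (Real.exp (y * u - ψ u))))
      ≤ s * μ u + s ^ 2 * μ' u := by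
  have hseg : uIcc u (u + s) ⊆ U := hconv.ordConnected.uIcc_subset hu hus
  have hμ'_le : ∀ x ∈ uIcc u (u + s), μ' x ≤ 2 * μ' u := fun x hx => by
    have hdist : M * |x - u| ≤ log 2 := by
      rw [← le_div_iff₀' hM]
      exact (abs_sub_left_of_mem_uIcc hx).trans (by rwa [add_sub_cancel_left])
    calc μ' x ≤ μ' u * exp (M * |x - u|) := hsc x (hseg hx) u hu
      _ ≤ μ' u * 2 := by
        gcongr
        · exact hpos u hu
        · exact (exp_le_exp.2 hdist).trans_eq (exp_log two_pos)
      _ = 2 * μ' u := mul_comm _ _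
  have htaylor := le_add_mul_add_sq_of_deriv2_le (fun x hx => hd1 x (hseg hx))
    (fun x hx => hd2 x (hseg hx)) hμ'_le
  rw [log_integral_exp_mul_withDensity_exp (hint _ hus), ← hψ _ hus]
  simp only [add_sub_cancel_left] at htaylor
  linarith

theorem stmt_4 (Q : Measure ℝ) [IsProbabilityMeasure Q]
    (U : Set ℝ) (hU : IsOpen U) (hconv : Convex ℝ U)
    (ψ μ μ' : ℝ → ℝ) (M : ℝ) (hM : 0 < M)
    (hψ : ∀ u ∈ U, ψ u = Real.log (∫ y, Real.exp (u * y) ∂Q))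
    (hint : ∀ u ∈ U, Integrable (fun y => Real.exp (u * y)) Q)
    (hd1 : ∀ u ∈ U, HasDerivAt ψ (μ u) u)
    (hd2 : ∀ u ∈ U, HasDerivAt μ (μ' u) u)
    (hpos : ∀ u ∈ U, 0 ≤ μ' u)
    (hsc : ∀ v ∈ U, ∀ w ∈ U, μ' v ≤ μ' w * Real.exp (M * |v - w|))
    (u s : ℝ) (hu : u ∈ U) (hus : u + s ∈ U)
    (hs : |s| ≤ Real.log 2 / M) :
    Real.log (∫ y, Real.exp (s * y)
        ∂(Q.withDensity fun y => ENNReal.ofReal (Real.exp (y * u - ψ u))))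
      ≤ s * μ u + s ^ 2 * μ' u :=
  stmt_4_general Q U hconv ψ μ μ' M hM hψ hint hd1 hd2 hpos hsc u s hu hus hs
end

section
/- Let λ > 0, L > 0, and let a_1, …, a_n ∈ ℝ^d with ‖a_t‖₂ ≤ L for all t. Define V_0 = λI and V_t = V_0 + Σ_{s=1}^t a_s a_sᵀ. Then for any b > 0, the number of indices t ∈ [n] with ‖a_t‖_{V_{t-1}^{-1}} ≥ b is at most (3d / log(1+b²)) · log(1 + L²/(λ·log(1+b²))). -/
/-!
Let `S` be the set of large rounds and `W = λI + ∑_{t ∈ S} a_t a_tᵀ`. Adding the rounds of `S` in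
increasing order, each `a_t` is still large for the matrix built from the earlier rounds of `S`
alone, since that matrix is below `V_{t-1}` in the Loewner order and inversion reverses this order.
The matrix determinant lemma then gives `det W ≥ λ^d (1 + b²)^|S|`, while AM-GM on the eigenvalues
gives `det W ≤ (tr W / d)^d ≤ (λ + |S| L² / d)^d`. Taking logarithms, `x = |S| log(1 + b²) / d`
satisfies `x ≤ log(1 + x r)` with `r = L² / (λ log(1 + b²))`, and this forces `x ≤ 2 log(1 + r)`.
-/

open Finset Matrix Real

theorem Finset.prod_le_sum_div_card_pow {ι : Type*} (s : Finset ι) (z : ι → ℝ)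
    (hz : ∀ i ∈ s, 0 ≤ z i) : ∏ i ∈ s, z i ≤ ((∑ i ∈ s, z i) / #s) ^ #s := by
  rcases s.eq_empty_or_nonempty with rfl | hs
  · simp
  have hcard : (#s : ℝ) ≠ 0 := by exact_mod_cast hs.card_pos.ne'
  have amgm := geom_mean_le_arith_mean_weighted s (fun _ ↦ (#s : ℝ)⁻¹) z
    (fun _ _ ↦ by positivity) (by simp [hcard]) hz
  rw [← Finset.mul_sum, inv_mul_eq_div, finsetProd_rpow s z hz] at amgm
  calc ∏ i ∈ s, z i = ((∏ i ∈ s, z i) ^ (#s : ℝ)⁻¹) ^ #s := by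
        rw [← rpow_natCast, ← rpow_mul (prod_nonneg hz), inv_mul_cancel₀ hcard, rpow_one]
    _ ≤ _ := pow_le_pow_left₀ (rpow_nonneg (prod_nonneg hz) _) amgm _

theorem Real.log_le_half_self {x : ℝ} (hx : 0 < x) : log x ≤ x / 2 := by
  have he : 2 ≤ exp 1 := by linarith [add_one_le_exp 1]
  have := log_le_sub_one_of_pos (div_pos hx (exp_pos 1))
  rw [log_div hx.ne' (exp_pos 1).ne', log_exp] at this
  have : x / exp 1 ≤ x / 2 := div_le_div_of_nonneg_left hx.le two_pos he
  linarith

theorem Real.le_two_mul_log_one_add {x r : ℝ} (hx : 0 ≤ x) (hr : 0 ≤ r)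
    (h : x ≤ log (1 + x * r)) : x ≤ 2 * log (1 + r) := by
  have hlog : 0 ≤ log (1 + r) := log_nonneg (by linarith)
  rcases le_or_gt x 1 with hx1 | hx1
  · have : log (1 + x * r) ≤ log (1 + r) := log_le_log (by positivity) (by nlinarith)
    linarith
  · have : log (1 + x * r) ≤ log x + log (1 + r) := by
      rw [← log_mul (by positivity) (by positivity)]
      exact log_le_log (by positivity) (by nlinarith)
    linarith [log_le_half_self (by positivity : 0 < x)]

theorem natCast_le_of_pow_mul_pow_le {lam c K : ℝ} {d m : ℕ} (hlam : 0 < lam) (hc : 0 < c)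
    (hK : 0 ≤ K) (h : lam ^ d * (1 + c) ^ m ≤ ((lam * d + m * K) / d) ^ d) :
    (m : ℝ) ≤ 2 * d / log (1 + c) * log (1 + K / (lam * log (1 + c))) := by
  have hℓ : 0 < log (1 + c) := log_pos (by linarith)
  obtain rfl | hd := d.eq_zero_or_pos
  · obtain rfl : m = 0 := by
      by_contra hm
      exact (one_lt_pow₀ (by linarith : 1 < 1 + c) hm).not_ge (by simpa using h)
    simp
  replace hd : (0 : ℝ) < d := by exact_mod_cast hd
  have hlog : m * log (1 + c) ≤ d * log (1 + m * K / (d * lam)) := by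
    have hsplit : (lam * d + m * K) / d = lam * (1 + m * K / (d * lam)) := by
      field_simp
    have := log_le_log (by positivity) h
    rw [hsplit, mul_pow, log_mul (by positivity) (by positivity), log_mul (by positivity)
      (by positivity), log_pow, log_pow, log_pow] at this
    linarith
  have hxr : m * log (1 + c) / d * (K / (lam * log (1 + c))) = m * K / (d * lam) := by
    field_simp
  have hx := le_two_mul_log_one_add (x := m * log (1 + c) / d) (r := K / (lam * log (1 + c)))
    (by positivity) (by positivity) (by rwa [hxr, div_le_iff₀' hd])
  rw [div_le_iff₀ hd] at hx
  rw [div_mul_eq_mul_div, le_div_iff₀ hℓ]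
  linarith

namespace Matrix

variable {n : Type*} [Fintype n] [DecidableEq n]

omit [DecidableEq n] in
theorem posSemidef_vecMulVec_self (x : n → ℝ) : (vecMulVec x x).PosSemidef := by
  simpa using posSemidef_vecMulVec_self_star x

theorem PosSemidef.det_le_trace_div_card_pow {A : Matrix n n ℝ} (hA : A.PosSemidef) :
    A.det ≤ (A.trace / Fintype.card n) ^ Fintype.card n := by
  simpa [hA.isHermitian.det_eq_prod_eigenvalues, hA.isHermitian.trace_eq_sum_eigenvalues]
    using prod_le_sum_div_card_pow univ _ fun i _ ↦ hA.eigenvalues_nonneg i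

theorem det_add_vecMulVec {R : Type*} [CommRing R] {A : Matrix n n R} (hA : IsUnit A.det)
    (u v : n → R) : (A + vecMulVec u v).det = A.det * (1 + v ⬝ᵥ A⁻¹ *ᵥ u) := by
  rw [vecMulVec_eq Unit, det_add_replicateCol_mul_replicateRow hA, Matrix.det_unique (n := Unit),
    add_apply, one_apply_eq, ← replicateRow_vecMul, replicateRow_mul_replicateCol_apply,
    ← dotProduct_mulVec]

theorem PosDef.dotProduct_inv_mulVec_le {A B : Matrix n n ℝ} (hA : A.PosDef)
    (hAB : (B - A).PosSemidef) (x : n → ℝ) : x ⬝ᵥ B⁻¹ *ᵥ x ≤ x ⬝ᵥ A⁻¹ *ᵥ x := by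
  have hB : B.PosDef := by simpa using hA.add_posSemidef hAB
  set u := B⁻¹ *ᵥ x
  set v := A⁻¹ *ᵥ x
  have hAv : A *ᵥ v = x := by
    simp [v, mulVec_mulVec, mul_nonsing_inv _ ((isUnit_iff_isUnit_det A).mp hA.isUnit)]
  have hBu : B *ᵥ u = x := by
    simp [u, mulVec_mulVec, mul_nonsing_inv _ ((isUnit_iff_isUnit_det B).mp hB.isUnit)]
  have hsymm : v ⬝ᵥ A *ᵥ u = u ⬝ᵥ A *ᵥ v := by
    simpa [(isHermitian_iff_isSymm.mp hA.isHermitian).eq] using dotProduct_transpose_mulVec A v u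
  -- `0 ≤ (u - v)ᵀ A (u - v) = uᵀ A u - 2 xᵀ u + xᵀ v ≤ uᵀ B u - 2 xᵀ u + xᵀ v = xᵀ v - xᵀ u`
  have h₁ : 0 ≤ (u - v) ⬝ᵥ A *ᵥ (u - v) := by
    simpa using hA.posSemidef.dotProduct_mulVec_nonneg (u - v)
  have h₂ : 0 ≤ u ⬝ᵥ (B - A) *ᵥ u := by simpa using hAB.dotProduct_mulVec_nonneg u
  rw [sub_mulVec, dotProduct_sub, hBu] at h₂
  rw [mulVec_sub, dotProduct_sub, sub_dotProduct, sub_dotProduct, hAv, hsymm, hAv] at h₁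
  simp only [dotProduct_comm u x, dotProduct_comm v x] at h₁ h₂
  linarith

end Matrix

section DesignMatrix

variable {ι n : Type*} [Fintype n] [DecidableEq n] (lam : ℝ) (a : ι → n → ℝ)

def designMatrix (s : Finset ι) : Matrix n n ℝ :=
  lam • 1 + ∑ i ∈ s, vecMulVec (a i) (a i)

variable {lam a}

theorem designMatrix_posDef (hlam : 0 < lam) (s : Finset ι) : (designMatrix lam a s).PosDef :=
  (PosDef.one.smul hlam).add_posSemidef
    (posSemidef_sum s fun i _ ↦ posSemidef_vecMulVec_self (a i))

omit [Fintype n] in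
theorem designMatrix_insert [DecidableEq ι] {t : ι} {s : Finset ι} (ht : t ∉ s) :
    designMatrix lam a (insert t s) = designMatrix lam a s + vecMulVec (a t) (a t) := by
  rw [designMatrix, designMatrix, sum_insert ht]
  abel

theorem posSemidef_designMatrix_sub {s t : Finset ι} (hst : s ⊆ t) :
    (designMatrix lam a t - designMatrix lam a s).PosSemidef := by
  classical
  rw [designMatrix, designMatrix, ← sum_sdiff hst, add_sub_add_left_eq_sub, add_sub_cancel_right]
  exact posSemidef_sum _ fun i _ ↦ posSemidef_vecMulVec_self (a i)

theorem trace_designMatrix (s : Finset ι) :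
    (designMatrix lam a s).trace = lam * Fintype.card n + ∑ i ∈ s, a i ⬝ᵥ a i := by
  simp [designMatrix, trace_sum, trace_vecMulVec]

theorem det_designMatrix_le (hlam : 0 < lam) {K : ℝ} {s : Finset ι}
    (ha : ∀ i ∈ s, a i ⬝ᵥ a i ≤ K) :
    (designMatrix lam a s).det
      ≤ ((lam * Fintype.card n + #s * K) / Fintype.card n) ^ Fintype.card n := by
  have hD := (designMatrix_posDef hlam s (a := a)).posSemidef
  refine hD.det_le_trace_div_card_pow.trans
    (pow_le_pow_left₀ (by positivity [hD.trace_nonneg]) ?_ _)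
  gcongr
  rw [trace_designMatrix]
  simpa using add_le_add_left (sum_le_card_nsmul s _ K ha) (lam * Fintype.card n)

theorem pow_mul_pow_le_det_designMatrix [LinearOrder ι] (hlam : 0 < lam) {c : ℝ} (hc : 0 ≤ c)
    (s : Finset ι) (h : ∀ t ∈ s, c ≤ a t ⬝ᵥ (designMatrix lam a {u ∈ s | u < t})⁻¹ *ᵥ a t) :
    lam ^ Fintype.card n * (1 + c) ^ #s ≤ (designMatrix lam a s).det := by
  induction s using Finset.induction_on_max with
  | empty => simp [designMatrix]
  | insert t s hlt ih =>
    have ht : t ∉ s := fun hts ↦ lt_irrefl t (hlt t hts)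
    have hprev : {u ∈ insert t s | u < t} = s := by
      rw [filter_insert, if_neg (lt_irrefl t), filter_true_of_mem hlt]
    have ih := ih fun u hu ↦ by
      simpa [filter_insert, (hlt u hu).not_gt] using h u (mem_insert_of_mem hu)
    have hgain : c ≤ a t ⬝ᵥ (designMatrix lam a s)⁻¹ *ᵥ a t := hprev ▸ h t (mem_insert_self t s)
    have hdet := (designMatrix_posDef hlam s (a := a)).det_pos
    rw [designMatrix_insert ht, det_add_vecMulVec hdet.ne'.isUnit, card_insert_of_notMem ht,
      pow_succ, ← mul_assoc]
    exact mul_le_mul ih (by linarith) (by linarith) hdet.le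

end DesignMatrix

theorem stmt_5_general (d n : ℕ) (lam L b : ℝ) (hlam : 0 < lam) (hb : 0 < b)
    (a : ℕ → Fin d → ℝ)
    (ha : ∀ t ∈ Finset.Icc 1 n, Real.sqrt (a t ⬝ᵥ a t) ≤ L)
    (V : ℕ → Matrix (Fin d) (Fin d) ℝ)
    (hV : ∀ t, V t = lam • (1 : Matrix (Fin d) (Fin d) ℝ)
        + ∑ s ∈ Finset.Icc 1 t, Matrix.vecMulVec (a s) (a s)) :
    (((Finset.Icc 1 n).filter fun t =>
        b ≤ Real.sqrt (a t ⬝ᵥ (V (t - 1))⁻¹.mulVec (a t))).card : ℝ)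
      ≤ (3 * d / Real.log (1 + b ^ 2))
          * Real.log (1 + L ^ 2 / (lam * Real.log (1 + b ^ 2))) := by
  set S := (Icc 1 n).filter fun t => b ≤ √(a t ⬝ᵥ (V (t - 1))⁻¹ *ᵥ a t)
  have hlarge (t : ℕ) (ht : t ∈ S) :
      b ^ 2 ≤ a t ⬝ᵥ (designMatrix lam a {u ∈ S | u < t})⁻¹ *ᵥ a t := by
    obtain ⟨-, hbt⟩ := mem_filter.mp ht
    have hearlier : {u ∈ S | u < t} ⊆ Icc 1 (t - 1) := fun u hu ↦ by
      simp only [S, mem_filter, mem_Icc] at hu ⊢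
      omega
    calc b ^ 2 ≤ a t ⬝ᵥ (V (t - 1))⁻¹ *ᵥ a t := (le_sqrt' hb).mp hbt
      _ ≤ _ := (designMatrix_posDef hlam _).dotProduct_inv_mulVec_le
          (hV (t - 1) ▸ posSemidef_designMatrix_sub hearlier) _
  have hdet := (pow_mul_pow_le_det_designMatrix hlam (sq_nonneg b) S hlarge).trans
    (det_designMatrix_le hlam fun t ht ↦ (sqrt_le_iff.mp (ha t (mem_filter.mp ht).1)).2)
  have hcount := natCast_le_of_pow_mul_pow_le hlam (by positivity : 0 < b ^ 2) (sq_nonneg L)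
    (by simpa using hdet)
  have hℓ : 0 ≤ log (1 + b ^ 2) := log_nonneg (by nlinarith)
  have hlog : 0 ≤ log (1 + L ^ 2 / (lam * log (1 + b ^ 2))) :=
    log_nonneg (le_add_of_nonneg_right (by positivity))
  calc (#S : ℝ) ≤ 2 * d / log (1 + b ^ 2) * log (1 + L ^ 2 / (lam * log (1 + b ^ 2))) := hcount
    _ ≤ _ := by gcongr; norm_num

theorem stmt_5 (d n : ℕ) (lam L b : ℝ) (hlam : 0 < lam) (hL : 0 < L) (hb : 0 < b)
    (a : ℕ → Fin d → ℝ)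
    (ha : ∀ t ∈ Finset.Icc 1 n, Real.sqrt (a t ⬝ᵥ a t) ≤ L)
    (V : ℕ → Matrix (Fin d) (Fin d) ℝ)
    (hV : ∀ t, V t = lam • (1 : Matrix (Fin d) (Fin d) ℝ)
        + ∑ s ∈ Finset.Icc 1 t, Matrix.vecMulVec (a s) (a s)) :
    (((Finset.Icc 1 n).filter fun t =>
        b ≤ Real.sqrt (a t ⬝ᵥ (V (t - 1))⁻¹.mulVec (a t))).card : ℝ)
      ≤ (3 * d / Real.log (1 + b ^ 2))
          * Real.log (1 + L ^ 2 / (lam * Real.log (1 + b ^ 2))) :=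
  stmt_5_general d n lam L b hlam hb a ha V hV
end

section
/- Let α: ℝ×ℝ → ℝ satisfy α(u,u') ≥ μ'(u)/(1 + M|u−u'|) for all u, u', where μ' ≥ 0 and M > 0. For vectors x_1,…,x_t ∈ ℝ^d with max_i |x_iᵀ(θ−θ')| ≤ D, define G = λI + Σ_i α(x_iᵀθ, x_iᵀθ') x_i x_iᵀ and H = λI + Σ_i μ'(x_iᵀθ) x_i x_iᵀ. Then H ⪯ (1 + MD)·G in the Loewner order. -/
open Finset Matrix

/-! (1 + MD)G − H = MDλ·I + ∑ᵢ ((1 + MD)αᵢ − μ'ᵢ) xᵢxᵢᵀ, a nonnegative combination of the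
identity and rank-one matrices xᵢxᵢᵀ, because 1 + M|xᵢᵀθ − xᵢᵀθ'| ≤ 1 + MD turns the lower bound
on αᵢ into μ'ᵢ ≤ (1 + MD)αᵢ. -/

lemma le_one_add_mul_mul_of_div_le {m a M δ D : ℝ} (hm : 0 ≤ m) (hM : 0 ≤ M) (hδ : 0 ≤ δ)
    (hδD : δ ≤ D) (h : m / (1 + M * δ) ≤ a) : m ≤ (1 + M * D) * a := by
  have hden : 0 < 1 + M * δ := by positivity
  have ha : 0 ≤ a := (div_nonneg hm hden.le).trans h
  calc m ≤ (1 + M * δ) * a := (div_le_iff₀' hden).mp h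
    _ ≤ (1 + M * D) * a := by gcongr

lemma posSemidef_sum_smul_vecMulVec_self {ι n : Type*} [Fintype ι] [Fintype n]
    (c : ι → ℝ) (hc : ∀ i, 0 ≤ c i) (x : ι → n → ℝ) :
    (∑ i, c i • vecMulVec (x i) (x i)).PosSemidef :=
  posSemidef_sum _ fun i _ => (posSemidef_vecMulVec_self_star (x i)).smul (hc i)

lemma sub_regularized_gram_eq {ι n : Type*} [Fintype ι] [Fintype n] [DecidableEq n]
    (r lam : ℝ) (a b : ι → ℝ) (x : ι → n → ℝ) :
    r • (lam • (1 : Matrix n n ℝ) + ∑ i, a i • vecMulVec (x i) (x i))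
        - (lam • (1 : Matrix n n ℝ) + ∑ i, b i • vecMulVec (x i) (x i))
      = ((r - 1) * lam) • (1 : Matrix n n ℝ)
        + ∑ i, (r * a i - b i) • vecMulVec (x i) (x i) := by
  simp only [smul_add, Finset.smul_sum, smul_smul, sub_mul, one_mul, sub_smul,
    Finset.sum_sub_distrib]
  abel

lemma posSemidef_smul_regularized_gram_sub {ι n : Type*} [Fintype ι] [Fintype n]
    [DecidableEq n] {r lam : ℝ} (hr : 1 ≤ r) (hlam : 0 ≤ lam) {a b : ι → ℝ}
    (hab : ∀ i, b i ≤ r * a i) (x : ι → n → ℝ) :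
    (r • (lam • (1 : Matrix n n ℝ) + ∑ i, a i • vecMulVec (x i) (x i))
        - (lam • (1 : Matrix n n ℝ) + ∑ i, b i • vecMulVec (x i) (x i))).PosSemidef := by
  rw [sub_regularized_gram_eq]
  exact (PosSemidef.one.smul (mul_nonneg (sub_nonneg.mpr hr) hlam)).add
    (posSemidef_sum_smul_vecMulVec_self _ (fun i => sub_nonneg.mpr (hab i)) x)

theorem stmt_10 (d t : ℕ) (M lam D : ℝ) (hM : 0 < M) (hlam : 0 < lam) (hD : 0 ≤ D)
    (μ' : ℝ → ℝ) (hpos : ∀ u, 0 ≤ μ' u)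
    (α : ℝ → ℝ → ℝ)
    (hα : ∀ u u' : ℝ, μ' u / (1 + M * |u - u'|) ≤ α u u')
    (x : Fin t → Fin d → ℝ) (θ θ' : Fin d → ℝ)
    (hDbound : ∀ i, |x i ⬝ᵥ (θ - θ')| ≤ D) :
    ((1 + M * D) • (lam • (1 : Matrix (Fin d) (Fin d) ℝ)
        + ∑ i, α (x i ⬝ᵥ θ) (x i ⬝ᵥ θ') • Matrix.vecMulVec (x i) (x i))
      - (lam • (1 : Matrix (Fin d) (Fin d) ℝ)
        + ∑ i, μ' (x i ⬝ᵥ θ) • Matrix.vecMulVec (x i) (x i))).PosSemidef := by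
  refine posSemidef_smul_regularized_gram_sub (le_add_of_nonneg_right (by positivity)) hlam.le
    (fun i => ?_) x
  refine le_one_add_mul_mul_of_div_le (hpos _) hM.le (abs_nonneg _) ?_ (hα _ _)
  simpa only [dotProduct_sub] using hDbound i
end

section
/- Let μ be twice differentiable with |μ''| ≤ M·μ' and μ' ≥ 0. Let x_⋆, x_1,…,x_n ∈ ℝ^d and θ_⋆ ∈ ℝ^d with x_tᵀθ_⋆ ≤ x_⋆ᵀθ_⋆ for all t. Then Σ_{t=1}^n μ'(x_tᵀθ_⋆) ≤ n·μ'(x_⋆ᵀθ_⋆) + M·Σ_{t=1}^n (μ(x_⋆ᵀθ_⋆) − μ(x_tᵀθ_⋆)). -/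
/-! The lower half of self-concordance, `μ'' ≥ -M μ'`, says that `M μ + μ'` is nondecreasing,
so at any `a ≤ b` we get `μ' a ≤ μ' b + M (μ b - μ a)`.
Summing this over the rounds, with `b = x_⋆ᵀθ_⋆`, gives the claim. -/

open Finset Matrix

section SelfConcordant

variable {μ μ' μ'' : ℝ → ℝ} {M : ℝ}

theorem monotone_const_mul_add_deriv (hd1 : ∀ u, HasDerivAt μ (μ' u) u)
    (hd2 : ∀ u, HasDerivAt μ' (μ'' u) u) (hlow : ∀ u, -(M * μ' u) ≤ μ'' u) :
    Monotone fun u => M * μ u + μ' u := by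
  have hderiv : ∀ u, HasDerivAt (fun u => M * μ u + μ' u) (M * μ' u + μ'' u) u :=
    fun u => ((hd1 u).const_mul M).add (hd2 u)
  refine monotone_of_deriv_nonneg (fun u => (hderiv u).differentiableAt) fun u => ?_
  rw [(hderiv u).deriv]
  linarith [hlow u]

theorem deriv_le_deriv_add_const_mul_sub (hd1 : ∀ u, HasDerivAt μ (μ' u) u)
    (hd2 : ∀ u, HasDerivAt μ' (μ'' u) u) (hsc : ∀ u, |μ'' u| ≤ M * μ' u) {a b : ℝ}
    (hab : a ≤ b) : μ' a ≤ μ' b + M * (μ b - μ a) := by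
  have hmono := monotone_const_mul_add_deriv hd1 hd2 fun u => neg_le_of_abs_le (hsc u)
  linarith [hmono hab]

theorem sum_deriv_le_card_mul_add_const_mul_sum {ι : Type*} (s : Finset ι)
    (hd1 : ∀ u, HasDerivAt μ (μ' u) u) (hd2 : ∀ u, HasDerivAt μ' (μ'' u) u)
    (hsc : ∀ u, |μ'' u| ≤ M * μ' u) {a : ι → ℝ} {b : ℝ} (hab : ∀ t ∈ s, a t ≤ b) :
    ∑ t ∈ s, μ' (a t) ≤ #s * μ' b + M * ∑ t ∈ s, (μ b - μ (a t)) :=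
  calc ∑ t ∈ s, μ' (a t) ≤ ∑ t ∈ s, (μ' b + M * (μ b - μ (a t))) :=
        sum_le_sum fun t ht => deriv_le_deriv_add_const_mul_sub hd1 hd2 hsc (hab t ht)
    _ = #s * μ' b + M * ∑ t ∈ s, (μ b - μ (a t)) := by
        rw [sum_add_distrib, sum_const, nsmul_eq_mul, mul_sum]

end SelfConcordant

theorem stmt_15_general (μ μ' μ'' : ℝ → ℝ) (M : ℝ)
    (hd1 : ∀ u, HasDerivAt μ (μ' u) u)
    (hd2 : ∀ u, HasDerivAt μ' (μ'' u) u)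
    (hsc : ∀ u, |μ'' u| ≤ M * μ' u)
    (d n : ℕ) (xs : Fin d → ℝ) (x : Fin n → Fin d → ℝ) (θ : Fin d → ℝ)
    (hopt : ∀ t, x t ⬝ᵥ θ ≤ xs ⬝ᵥ θ) :
    ∑ t, μ' (x t ⬝ᵥ θ)
      ≤ n * μ' (xs ⬝ᵥ θ) + M * ∑ t, (μ (xs ⬝ᵥ θ) - μ (x t ⬝ᵥ θ)) := by
  simpa using sum_deriv_le_card_mul_add_const_mul_sum univ hd1 hd2 hsc fun t _ => hopt t

theorem stmt_15 (μ μ' μ'' : ℝ → ℝ) (M : ℝ) (hM : 0 < M)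
    (hd1 : ∀ u, HasDerivAt μ (μ' u) u)
    (hd2 : ∀ u, HasDerivAt μ' (μ'' u) u)
    (hpos : ∀ u, 0 ≤ μ' u)
    (hsc : ∀ u, |μ'' u| ≤ M * μ' u)
    (d n : ℕ) (xs : Fin d → ℝ) (x : Fin n → Fin d → ℝ) (θ : Fin d → ℝ)
    (hopt : ∀ t, x t ⬝ᵥ θ ≤ xs ⬝ᵥ θ) :
    ∑ t, μ' (x t ⬝ᵥ θ)
      ≤ n * μ' (xs ⬝ᵥ θ) + M * ∑ t, (μ (xs ⬝ᵥ θ) - μ (x t ⬝ᵥ θ)) :=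
  stmt_15_general μ μ' μ'' M hd1 hd2 hsc d n xs x θ hopt
end

section
/- Let λ > 0 and let G be a positive definite d×d matrix with G ⪰ λI. Suppose g, g' ∈ ℝ^d satisfy g − g' = G(θ − θ') for θ, θ' ∈ ℝ^d, and suppose ‖g − g'‖_{H^{-1}} ≤ γ for a positive definite H satisfying H ⪯ (1 + M‖θ − θ'‖)·G with M > 0. Then λ‖θ − θ'‖² ≤ γ² + Mγ²‖θ − θ'‖, and hence ‖θ − θ'‖ ≤ γ/√λ + Mγ²/λ. -/
/-!
Write `x = θ - θ'` and `u = g - g' = G x`. Cauchy–Schwarz in the `H`-inner product gives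
`(xᵀ G x)² = (xᵀ u)² ≤ (xᵀ H x)(uᵀ H⁻¹ u) ≤ (1 + M‖x‖)(xᵀ G x) γ²`, so
`λ‖x‖² ≤ xᵀ G x ≤ (1 + M‖x‖) γ²`. For the explicit bound: if `‖x‖ > t = γ/√λ + Mγ²/λ`, then
`√λ‖x‖ ≥ γ` and `λt = √λγ + Mγ²`, so `λ‖x‖² > (√λγ + Mγ²)‖x‖ ≥ γ² + Mγ²‖x‖`.
-/

namespace Matrix

variable {n R : Type*} [Fintype n]

theorem dotProduct_mulVec_le_of_posSemidef_sub [CommRing R] [PartialOrder R] [IsOrderedAddMonoid R]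
    [StarRing R] [TrivialStar R] {A B : Matrix n n R} (h : (A - B).PosSemidef) (x : n → R) :
    x ⬝ᵥ B *ᵥ x ≤ x ⬝ᵥ A *ᵥ x := by
  have := h.dotProduct_mulVec_nonneg x
  rwa [star_trivial, sub_mulVec, dotProduct_sub, sub_nonneg] at this

theorem PosDef.sq_dotProduct_le [DecidableEq n] [Field R] [LinearOrder R] [IsStrictOrderedRing R]
    [StarRing R] [TrivialStar R] {H : Matrix n n R} (hH : H.PosDef) (x u : n → R) :
    (x ⬝ᵥ u) ^ 2 ≤ (x ⬝ᵥ H *ᵥ x) * (u ⬝ᵥ H⁻¹ *ᵥ u) := by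
  have hsymm : LinearMap.IsSymm (toBilin' H) := LinearMap.BilinForm.isSymm_iff.mp <|
    isSymm_toBilin'_iff_isSymm.mpr (isHermitian_iff_isSymm.mp hH.isHermitian)
  have hcancel : H *ᵥ (H⁻¹ *ᵥ u) = u := by
    rw [mulVec_mulVec, mul_nonsing_inv _ ((isUnit_iff_isUnit_det H).mp hH.isUnit), one_mulVec]
  have hnonneg (v : n → R) : 0 ≤ toBilin' H v v := by
    simpa [toBilin'_apply'] using hH.posSemidef.dotProduct_mulVec_nonneg v
  have := (toBilin' H).apply_sq_le_of_symm hnonneg hsymm x (H⁻¹ *ᵥ u)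
  rwa [toBilin'_apply', toBilin'_apply', toBilin'_apply', hcancel,
    dotProduct_comm (H⁻¹ *ᵥ u)] at this

end Matrix

open Matrix

theorem le_div_sqrt_add_div_of_mul_sq_le {a b c s : ℝ} (ha : 0 < a) (hb : 0 ≤ b) (hc : 0 ≤ c)
    (h : a * s ^ 2 ≤ b ^ 2 + c * s) : s ≤ b / √a + c / a := by
  set r := √a
  have hr0 : 0 < r := Real.sqrt_pos.mpr ha
  have hr2 : r ^ 2 = a := Real.sq_sqrt ha.le
  by_contra! hlt
  have hat : a * (b / r + c / a) = r * b + c := by field_simp; rw [← hr2]; ring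
  have hs : 0 < s := lt_of_le_of_lt (by positivity) hlt
  have hbs : b ≤ r * s :=
    (div_le_iff₀' hr0).mp ((le_add_of_nonneg_right (by positivity)).trans hlt.le)
  have : b ^ 2 + c * s < a * s ^ 2 := calc
    b ^ 2 + c * s ≤ b * (r * s) + c * s := by nlinarith
    _ = (r * b + c) * s := by ring
    _ = a * (b / r + c / a) * s := by rw [hat]
    _ < a * s * s := by gcongr
    _ = a * s ^ 2 := by ring
  linarith

theorem stmt_19_general (d : ℕ) (lam M γ : ℝ) (hlam : 0 < lam) (hM : 0 < M) (hγ : 0 ≤ γ)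
    (G H : Matrix (Fin d) (Fin d) ℝ) (hH : H.PosDef)
    (hGlam : (G - lam • (1 : Matrix (Fin d) (Fin d) ℝ)).PosSemidef)
    (g g' θ θ' : Fin d → ℝ)
    (hgG : g - g' = G.mulVec (θ - θ'))
    (hHG : ((1 + M * Real.sqrt ((θ - θ') ⬝ᵥ (θ - θ'))) • G - H).PosSemidef)
    (hconf : Real.sqrt ((g - g') ⬝ᵥ H⁻¹.mulVec (g - g')) ≤ γ) :
    lam * ((θ - θ') ⬝ᵥ (θ - θ'))
        ≤ γ ^ 2 + M * γ ^ 2 * Real.sqrt ((θ - θ') ⬝ᵥ (θ - θ')) ∧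
    Real.sqrt ((θ - θ') ⬝ᵥ (θ - θ'))
        ≤ γ / Real.sqrt lam + M * γ ^ 2 / lam := by
  set x := θ - θ'
  set s := √(x ⬝ᵥ x)
  have hs : s ^ 2 = x ⬝ᵥ x := Real.sq_sqrt (by simpa using dotProduct_star_self_nonneg x)
  have hGlamx : lam * (x ⬝ᵥ x) ≤ x ⬝ᵥ G *ᵥ x := by
    simpa only [smul_mulVec, one_mulVec, dotProduct_smul, smul_eq_mul]
      using dotProduct_mulVec_le_of_posSemidef_sub hGlam x
  have hHx : x ⬝ᵥ H *ᵥ x ≤ (1 + M * s) * (x ⬝ᵥ G *ᵥ x) := by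
    simpa only [smul_mulVec, dotProduct_smul, smul_eq_mul]
      using dotProduct_mulVec_le_of_posSemidef_sub hHG x
  have hdual : (g - g') ⬝ᵥ H⁻¹ *ᵥ (g - g') ≤ γ ^ 2 := (Real.sqrt_le_iff.mp hconf).2
  have hGx : x ⬝ᵥ G *ᵥ x ≤ (1 + M * s) * γ ^ 2 := by
    have hH0 : 0 ≤ x ⬝ᵥ H *ᵥ x := by simpa using hH.posSemidef.dotProduct_mulVec_nonneg x
    have hsq : (x ⬝ᵥ G *ᵥ x) ^ 2 ≤ (1 + M * s) * γ ^ 2 * (x ⬝ᵥ G *ᵥ x) := calc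
      (x ⬝ᵥ G *ᵥ x) ^ 2 ≤ (x ⬝ᵥ H *ᵥ x) * ((g - g') ⬝ᵥ H⁻¹ *ᵥ (g - g')) := by
        simpa only [hgG] using hH.sq_dotProduct_le x (g - g')
      _ ≤ (x ⬝ᵥ H *ᵥ x) * γ ^ 2 := by gcongr
      _ ≤ (1 + M * s) * (x ⬝ᵥ G *ᵥ x) * γ ^ 2 := by gcongr
      _ = (1 + M * s) * γ ^ 2 * (x ⬝ᵥ G *ᵥ x) := by ring
    nlinarith [show 0 ≤ (1 + M * s) * γ ^ 2 by positivity]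
  have hbound : lam * s ^ 2 ≤ γ ^ 2 + M * γ ^ 2 * s := by rw [hs]; linarith
  exact ⟨hs ▸ hbound, le_div_sqrt_add_div_of_mul_sq_le hlam hγ (by positivity) hbound⟩

theorem stmt_19 (d : ℕ) (lam M γ : ℝ) (hlam : 0 < lam) (hM : 0 < M) (hγ : 0 ≤ γ)
    (G H : Matrix (Fin d) (Fin d) ℝ) (hG : G.PosDef) (hH : H.PosDef)
    (hGlam : (G - lam • (1 : Matrix (Fin d) (Fin d) ℝ)).PosSemidef)
    (g g' θ θ' : Fin d → ℝ)
    (hgG : g - g' = G.mulVec (θ - θ'))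
    (hHG : ((1 + M * Real.sqrt ((θ - θ') ⬝ᵥ (θ - θ'))) • G - H).PosSemidef)
    (hconf : Real.sqrt ((g - g') ⬝ᵥ H⁻¹.mulVec (g - g')) ≤ γ) :
    lam * ((θ - θ') ⬝ᵥ (θ - θ'))
        ≤ γ ^ 2 + M * γ ^ 2 * Real.sqrt ((θ - θ') ⬝ᵥ (θ - θ')) ∧
    Real.sqrt ((θ - θ') ⬝ᵥ (θ - θ'))
        ≤ γ / Real.sqrt lam + M * γ ^ 2 / lam :=
  stmt_19_general d lam M γ hlam hM hγ G H hH hGlam g g' θ θ' hgG hHG hconf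
end
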